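/- (Closed form of the weighted squared-ℓ₁ prox via the split index.) Let λ > 0, a ∈ ℝ^p with a > 0 coordinatewise, and u₀ ∈ ℝ^p with u₀ ≥ 0. Let (·) be a permutation sorting u₀ in decreasing order, u_{0(1)} ≥ ⋯ ≥ u_{0(p)}, and suppose u_{0(1)} > 0. Define ρ = max{ j ∈ {1, …, p} : u_{0(j)} − (λ/(1 + λΣ_{r=1}^j a_{(r)}))·Σ_{r=1}^j a_{(r)} u_{0(r)} > 0 } and τ = (λ/(1 + λΣ_{r=1}^ρ a_{(r)}))·Σ_{r=1}^ρ a_{(r)} u_{0(r)}. Then the unique minimizer u* over {u ∈ ℝ^p : u ≥ 0} of F(u) = (1/2)Σ_{r=1}^p a_r (u_r − u_{0r})² + (λ/2)(Σ_{r=1}^p a_r u_r)² is given coordinatewise by u*_r = max{0, u_{0r} − τ}; in particular, exactly the ρ largest coordinates of u₀ (under the chosen sorting) are nonzero in u*. -/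
import Mathlib


noncomputable section

/-- The weighted squared-`ℓ₁` prox objective on the nonnegative orthant:
`F(u) = (1/2) Σ_r a_r (u_r − u₀ᵣ)² + (λ/2)(Σ_r a_r u_r)²`. -/
def weightedProxObj {p : ℕ} (lam : ℝ) (a u₀ u : Fin p → ℝ) : ℝ :=
  (1 / 2) * (∑ r, a r * (u r - u₀ r) ^ 2) + lam / 2 * (∑ r, a r * u r) ^ 2

/-- The split-index condition for index `j` (under the sorting permutation `π`):
`u₀_{(j)} − (λ/(1 + λ Σ_{r≤j} a_{(r)})) Σ_{r≤j} a_{(r)} u₀_{(r)} > 0`. -/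
def splitCond {p : ℕ} (lam : ℝ) (a u₀ : Fin p → ℝ) (π : Equiv.Perm (Fin p))
    (j : Fin p) : Prop :=
  lam / (1 + lam * ∑ r ∈ Finset.Iic j, a (π r)) *
      (∑ r ∈ Finset.Iic j, a (π r) * u₀ (π r)) < u₀ (π j)

/-- closed form of the weighted squared-`ℓ₁` prox via the split
index: with `u₀` sorted decreasingly by the permutation `π`, `u₀_{(1)} > 0`,
`ρ` the largest index satisfying the split condition, and the threshold `τ`,
the unique minimizer `u*` of `F` over the nonnegative orthant is
`u*_r = max{0, u₀ᵣ − τ}`; in particular exactly the coordinates `(j)` with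
`j ≤ ρ` are nonzero in `u*`. -/
theorem weighted_prox_closed_form {p : ℕ} (hp : 0 < p) (lam : ℝ) (hlam : 0 < lam)
    (a : Fin p → ℝ) (ha : ∀ r, 0 < a r)
    (u₀ : Fin p → ℝ) (hu₀ : ∀ r, 0 ≤ u₀ r)
    (π : Equiv.Perm (Fin p))
    (hsort : ∀ i j : Fin p, i ≤ j → u₀ (π j) ≤ u₀ (π i))
    (hfirst : 0 < u₀ (π ⟨0, hp⟩))
    (ρ : Fin p) (hρ : splitCond lam a u₀ π ρ)
    (hρmax : ∀ j : Fin p, splitCond lam a u₀ π j → j ≤ ρ)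
    (τ : ℝ)
    (hτ : τ = lam / (1 + lam * ∑ r ∈ Finset.Iic ρ, a (π r)) *
      (∑ r ∈ Finset.Iic ρ, a (π r) * u₀ (π r)))
    (ustar : Fin p → ℝ) (hustar : ∀ r, 0 ≤ ustar r)
    (hmin : ∀ u : Fin p → ℝ, (∀ r, 0 ≤ u r) →
      weightedProxObj lam a u₀ ustar ≤ weightedProxObj lam a u₀ u) :
    (∀ r : Fin p, ustar r = max 0 (u₀ r - τ)) ∧
    (∀ j : Fin p, ustar (π j) ≠ 0 ↔ j ≤ ρ) := by
  classical
  simp only [splitCond] at hρ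
  set A := ∑ r ∈ Finset.Iic ρ, a (π r) with hAdef
  set B := ∑ r ∈ Finset.Iic ρ, a (π r) * u₀ (π r) with hBdef
  have hAnn : 0 ≤ A := Finset.sum_nonneg fun r _ => (ha (π r)).le
  have hden : 0 < 1 + lam * A := by nlinarith
  have hbig : ∀ j : Fin p, j ≤ ρ → τ < u₀ (π j) := by
    intro j hj
    have hτρ : τ < u₀ (π ρ) := by rw [hτ]; exact hρ
    exact lt_of_lt_of_le hτρ (hsort j ρ hj)
  have hsmall : ∀ j : Fin p, ρ < j → u₀ (π j) ≤ τ := by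
    intro j hj
    have hjv : (ρ : ℕ) < (j : ℕ) := hj
    have h1 : (ρ : ℕ) + 1 < p := by have := j.isLt; omega
    set σ : Fin p := ⟨(ρ : ℕ) + 1, h1⟩ with hσdef
    have hσρ : ρ < σ := by simp [Fin.lt_def, hσdef]
    have hnot : ¬ splitCond lam a u₀ π σ := fun h => absurd (hρmax σ h) (not_le.mpr hσρ)
    simp only [splitCond] at hnot
    have hσnot : σ ∉ Finset.Iic ρ := by
      simp only [Finset.mem_Iic]
      exact not_le.mpr hσρ
    have hins : Finset.Iic σ = insert σ (Finset.Iic ρ) := by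
      ext r
      simp only [Finset.mem_Iic, Finset.mem_insert, Fin.le_def, Fin.ext_iff, hσdef]
      omega
    rw [hins, Finset.sum_insert hσnot, Finset.sum_insert hσnot] at hnot
    push_neg at hnot
    have hden2 : 0 < 1 + lam * (a (π σ) + A) := by nlinarith [ha (π σ)]
    rw [div_mul_eq_mul_div, le_div_iff₀ hden2] at hnot
    have huσ : u₀ (π σ) ≤ τ := by
      rw [hτ, div_mul_eq_mul_div, le_div_iff₀ hden]
      nlinarith [ha (π σ)]
    have hσj : σ ≤ j := by
      rw [Fin.le_def]
      simp only [hσdef]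
      omega
    exact le_trans (hsort σ j hσj) huσ
  set v : Fin p → ℝ := fun r => max 0 (u₀ r - τ) with hvdef
  have hvnn : ∀ r, 0 ≤ v r := fun r => le_max_left 0 _
  have hvle : ∀ j : Fin p, j ≤ ρ → v (π j) = u₀ (π j) - τ := by
    intro j hj
    have := hbig j hj
    simp only [hvdef]
    exact max_eq_right (by linarith)
  have hvgt : ∀ j : Fin p, ρ < j → v (π j) = 0 := by
    intro j hj
    have := hsmall j hj
    simp only [hvdef]
    exact max_eq_left (by linarith)
  have hS : lam * (∑ r, a r * v r) = τ := by
    have hsum : (∑ r, a r * v r) = B - τ * A := by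
      have e1 : (∑ j, a (π j) * v (π j)) = ∑ r, a r * v r :=
        Equiv.sum_comp π (fun r => a r * v r)
      rw [← e1, ← Finset.sum_add_sum_compl (Finset.Iic ρ)]
      have e2 : ∑ j ∈ (Finset.Iic ρ)ᶜ, a (π j) * v (π j) = 0 := by
        apply Finset.sum_eq_zero
        intro j hjm
        have : ρ < j := by
          simpa [Finset.mem_compl, Finset.mem_Iic, not_le] using hjm
        rw [hvgt j this, mul_zero]
      have e3 : ∑ j ∈ Finset.Iic ρ, a (π j) * v (π j)
          = ∑ j ∈ Finset.Iic ρ, (a (π j) * u₀ (π j) - τ * a (π j)) := by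
        refine Finset.sum_congr rfl fun j hjm => ?_
        rw [hvle j (Finset.mem_Iic.mp hjm)]; ring
      rw [e2, add_zero, e3, Finset.sum_sub_distrib, ← Finset.mul_sum, ← hAdef, ← hBdef]
    have hτA : τ * (1 + lam * A) = lam * B := by
      rw [hτ]; field_simp
    rw [hsum]; linear_combination -hτA
  have expand : ∀ u : Fin p → ℝ,
      weightedProxObj lam a u₀ u =
        weightedProxObj lam a u₀ v
        + (∑ r, a r * (v r - u₀ r + τ) * (u r - v r))
        + (1 / 2) * (∑ r, a r * (u r - v r) ^ 2)
        + lam / 2 * (∑ r, a r * (u r - v r)) ^ 2 := by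
    intro u
    have hD : (∑ r, a r * u r) = (∑ r, a r * v r) + ∑ r, a r * (u r - v r) := by
      rw [← Finset.sum_add_distrib]
      exact Finset.sum_congr rfl fun r _ => by ring
    have h1 : (∑ r, a r * (u r - u₀ r) ^ 2)
        = ((∑ r, a r * (v r - u₀ r) ^ 2)
          + ∑ r, 2 * (a r * ((v r - u₀ r) * (u r - v r))))
          + ∑ r, a r * (u r - v r) ^ 2 := by
      rw [← Finset.sum_add_distrib, ← Finset.sum_add_distrib]
      exact Finset.sum_congr rfl fun r _ => by ring
    have h2 : (∑ r, a r * (v r - u₀ r + τ) * (u r - v r))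
        = (∑ r, 2 * (a r * ((v r - u₀ r) * (u r - v r)))) / 2
          + τ * ∑ r, a r * (u r - v r) := by
      rw [Finset.mul_sum, Finset.sum_div, ← Finset.sum_add_distrib]
      exact Finset.sum_congr rfl fun r _ => by ring
    simp only [weightedProxObj]
    rw [hD, h1, h2]
    linear_combination (∑ r, a r * (u r - v r)) * hS
  have hG : 0 ≤ ∑ r, a r * (v r - u₀ r + τ) * (ustar r - v r) := by
    apply Finset.sum_nonneg
    intro r _
    rcases le_or_gt (π.symm r) ρ with h | h
    · have hh := hvle _ h
      rw [Equiv.apply_symm_apply] at hh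
      have hz : v r - u₀ r + τ = 0 := by rw [hh]; ring
      rw [hz, mul_zero, zero_mul]
    · have hz := hvgt _ h
      rw [Equiv.apply_symm_apply] at hz
      have hle := hsmall _ h
      rw [Equiv.apply_symm_apply] at hle
      rw [hz]
      have h1 : 0 ≤ v r - u₀ r + τ := by rw [hz]; linarith
      rw [hz] at h1
      exact mul_nonneg (mul_nonneg (ha r).le h1) (by simpa using hustar r)
  have hvF := hmin v hvnn
  have hexp := expand ustar
  have hDsq : 0 ≤ lam / 2 * (∑ r, a r * (ustar r - v r)) ^ 2 := by positivity
  have hQnn : 0 ≤ ∑ r, a r * (ustar r - v r) ^ 2 :=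
    Finset.sum_nonneg fun r _ => mul_nonneg (ha r).le (sq_nonneg _)
  have hQ0 : (∑ r, a r * (ustar r - v r) ^ 2) = 0 := by
    have : (∑ r, a r * (ustar r - v r) ^ 2) ≤ 0 := by linarith
    linarith
  have heq : ∀ r, ustar r = v r := by
    intro r
    have hterm : a r * (ustar r - v r) ^ 2 = 0 := by
      have := (Finset.sum_eq_zero_iff_of_nonneg
        (fun r (_ : r ∈ Finset.univ) => mul_nonneg (ha r).le (sq_nonneg _))).mp hQ0 r (Finset.mem_univ r)
      exact this
    have hsq : (ustar r - v r) ^ 2 = 0 := by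
      rcases mul_eq_zero.mp hterm with h | h
      · exact absurd h (ha r).ne'
      · exact h
    have := pow_eq_zero_iff (n := 2) (by norm_num) |>.mp hsq
    linarith [this]
  refine ⟨fun r => heq r, fun j => ?_⟩
  rw [heq (π j)]
  by_cases hj : j ≤ ρ
  · rw [hvle j hj]
    exact ⟨fun _ => hj, fun _ => (sub_pos.mpr (hbig j hj)).ne'⟩
  · rw [hvgt j (not_le.mp hj)]
    simp [hj]
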